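/- Let Λ be a numerical semigroup with conductor c = λ_k and let λ_s (s > k) be an order-0 seed, Λ̃ = Λ \ {λ_s}. If s ≥ k + 2, then the only order-(s−2) seed of Λ̃ is λ_s + 1. -/

import Mathlib

/-- A numerical semigroup: a subset of ℕ containing 0, closed under addition,
with finite complement. -/
def IsNumericalSemigroup (S : Set ℕ) : Prop :=
  0 ∈ S ∧ (∀ a ∈ S, ∀ b ∈ S, a + b ∈ S) ∧ Sᶜ.Finite

/-- `nsElt S i` = λ_i, the i-th smallest element of `S` (λ_0 = 0 when 0 ∈ S). -/
noncomputable def nsElt (S : Set ℕ) (i : ℕ) : ℕ := Nat.nth (· ∈ S) i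

/-- The conductor: the smallest `c` such that every `n ≥ c` lies in `S`. -/
noncomputable def nsConductor (S : Set ℕ) : ℕ := sInf {c | ∀ n, c ≤ n → n ∈ S}

/-- The genus: the number of gaps. -/
noncomputable def nsGenus (S : Set ℕ) : ℕ := Sᶜ.ncard

/-- A generator: a nonzero element of `S` which is not a sum of two nonzero
elements of `S`. -/
def IsGenerator (S : Set ℕ) (σ : ℕ) : Prop :=
  σ ∈ S ∧ σ ≠ 0 ∧ ¬ ∃ a ∈ S, ∃ b ∈ S, a ≠ 0 ∧ b ≠ 0 ∧ a + b = σ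

/-- `nsDel S i` = Λ_i = Λ \ {λ_1, …, λ_i}. -/
def nsDel (S : Set ℕ) (i : ℕ) : Set ℕ := S \ (nsElt S '' Set.Icc 1 i)

/-!
From the conductor on, the elements of `Λ` are consecutive, so `s ≥ k + 2` forces
`λ_{s-2} = a`, `λ_{s-1} = a + 1`, `λ_s = a + 2` with `a ≥ c`. Removing `λ_1, …, λ_{s-2}` and
`λ_s` therefore leaves `{0, a + 1} ∪ [a + 3, ∞)`. In that set every integer `≥ 2a + 4` is
`(a + 1) + (≥ a + 3)`, while `2a + 3` is not a sum of two nonzero elements. Hence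
`x + λ_{s-2} = x + a` with `x > a + 2` is a generator exactly when `x = a + 3 = λ_s + 1`.
-/

section Elements

variable {S : Set ℕ}

theorem nsElt_zero (h0 : 0 ∈ S) : nsElt S 0 = 0 :=
  Nat.nth_zero_of_zero h0

theorem nsElt_strictMono (hinf : S.Infinite) : StrictMono (nsElt S) :=
  Nat.nth_strictMono hinf

theorem nsElt_add_of_forall_mem (hinf : S.Infinite) {k : ℕ}
    (hk : ∀ n, nsElt S k ≤ n → n ∈ S) (t : ℕ) : nsElt S (k + t) = nsElt S k + t := by
  induction t with
  | zero => rfl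
  | succ t ih =>
    have hlt : nsElt S (k + t) < nsElt S (k + t + 1) := nsElt_strictMono hinf (by omega)
    have hnext : nsElt S (k + t) + 1 ∈ S := hk _ (by omega)
    -- nothing of `S` lies strictly between two consecutive elements
    have hle : ¬ nsElt S (k + t) + 1 < nsElt S (k + t + 1) := fun h =>
      absurd (Nat.le_nth_of_lt_nth_succ h hnext) (by unfold nsElt; omega)
    rw [← add_assoc]
    omega

theorem mem_nsDel_iff (h0 : 0 ∈ S) (hinf : S.Infinite) {i x : ℕ} :
    x ∈ nsDel S i ↔ x ∈ S ∧ (x = 0 ∨ nsElt S i < x) := by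
  classical
  have hmono := nsElt_strictMono hinf
  refine and_congr_right fun hx => ⟨fun hnot => ?_, ?_⟩
  · by_contra! hsmall
    have hcount : nsElt S (Nat.count (· ∈ S) x) = x := Nat.nth_count hx
    refine hnot ⟨Nat.count (· ∈ S) x, ⟨?_, ?_⟩, hcount⟩
    · by_contra! hzero
      rw [Nat.lt_one_iff.mp hzero, nsElt_zero h0] at hcount
      exact hsmall.1 hcount.symm
    · exact hmono.le_iff_le.mp (hcount.trans_le hsmall.2)
  · rintro (rfl | hgt) ⟨j, hj, hjx⟩
    · have := hmono (show 0 < j from hj.1)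
      rw [nsElt_zero h0] at this
      omega
    · have := hmono.monotone hj.2
      omega

end Elements

namespace IsNumericalSemigroup

variable {S : Set ℕ} (hS : IsNumericalSemigroup S)
include hS

theorem infinite : S.Infinite :=
  hS.2.2.infinite_compl.mono (by simp)

theorem mem_of_conductor_le {n : ℕ} (hn : nsConductor S ≤ n) : n ∈ S := by
  have hne : {c | ∀ n, c ≤ n → n ∈ S}.Nonempty := by
    obtain ⟨u, hu⟩ := hS.2.2.bddAbove
    exact ⟨u + 1, fun n hn => by_contra fun hns => absurd (hu hns) (by omega)⟩
  exact Nat.sInf_mem hne n hn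

theorem nsElt_eq_conductor_add {k : ℕ} (hk : nsElt S k = nsConductor S) {i : ℕ} (hi : k ≤ i) :
    nsElt S i = nsConductor S + (i - k) := by
  have := nsElt_add_of_forall_mem hS.infinite (fun n hn => hS.mem_of_conductor_le (hk ▸ hn))
    (i - k)
  rwa [Nat.add_sub_cancel' hi, hk] at this

theorem mem_nsDel_sdiff_iff {i : ℕ} (hi : nsConductor S ≤ nsElt S i) {y : ℕ} :
    y ∈ nsDel S i \ {nsElt S i + 2} ↔ y = 0 ∨ y = nsElt S i + 1 ∨ nsElt S i + 3 ≤ y := by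
  rw [Set.mem_sdiff, mem_nsDel_iff hS.1 hS.infinite, Set.mem_singleton_iff]
  constructor
  · rintro ⟨⟨-, hy⟩, hne⟩
    omega
  · intro hy
    refine ⟨⟨?_, by omega⟩, by omega⟩
    rcases hy with rfl | hy | hy
    exacts [hS.1, hS.mem_of_conductor_le (by omega), hS.mem_of_conductor_le (by omega)]

end IsNumericalSemigroup

theorem isGenerator_iff_of_mem_iff {T : Set ℕ} {a : ℕ}
    (hT : ∀ y, y ∈ T ↔ y = 0 ∨ y = a + 1 ∨ a + 3 ≤ y) {n : ℕ} (hn : 2 * a + 3 ≤ n) :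
    IsGenerator T n ↔ n = 2 * a + 3 := by
  constructor
  · rintro ⟨-, -, hnsum⟩
    by_contra hne
    exact hnsum ⟨a + 1, (hT _).mpr (by omega), n - (a + 1), (hT _).mpr (by omega),
      by omega, by omega, by omega⟩
  · rintro rfl
    refine ⟨(hT _).mpr (by omega), by omega, ?_⟩
    rintro ⟨u, hu, v, hv, hu0, hv0, huv⟩
    rw [hT] at hu hv
    omega

theorem stmt15_general (S : Set ℕ) (hS : IsNumericalSemigroup S) (k s : ℕ)
    (hk : nsElt S k = nsConductor S) (hs : k + 2 ≤ s) :
    ∀ x, (x ∈ S \ {nsElt S s} ∧ nsElt S s < x ∧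
        IsGenerator (nsDel S (s - 2) \ {nsElt S s}) (x + nsElt S (s - 2))) ↔
      x = nsElt S s + 1 := by
  intro x
  set a := nsElt S (s - 2) with ha
  have hsa : nsElt S s = a + 2 := by
    rw [ha, hS.nsElt_eq_conductor_add hk (by omega), hS.nsElt_eq_conductor_add hk (by omega)]
    omega
  have hca : nsConductor S ≤ a := by rw [ha, hS.nsElt_eq_conductor_add hk (by omega)]; omega
  rw [hsa]
  have hT (y : ℕ) := hS.mem_nsDel_sdiff_iff hca (y := y)
  constructor
  · rintro ⟨-, hx, hgen⟩
    have := (isGenerator_iff_of_mem_iff hT (by omega)).mp hgen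
    omega
  · rintro rfl
    exact ⟨⟨hS.mem_of_conductor_le (by omega), by simp⟩, by omega,
      (isGenerator_iff_of_mem_iff hT (by omega)).mpr (by omega)⟩

theorem stmt15 (S : Set ℕ) (hS : IsNumericalSemigroup S) (k s : ℕ)
    (hk : nsElt S k = nsConductor S) (hs : k + 2 ≤ s)
    (hgen : IsGenerator S (nsElt S s)) :
    ∀ x, (x ∈ S \ {nsElt S s} ∧ nsElt S s < x ∧
        IsGenerator (nsDel S (s - 2) \ {nsElt S s}) (x + nsElt S (s - 2))) ↔
      x = nsElt S s + 1 :=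
  stmt15_general S hS k s hk hs
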